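/- arXiv:2001.03718 — 4 statements merged into one kernel-verified Lean document; each statement's English description precedes it below -/
import Mathlib

section
/- For all x, y in (-2,2) and ρ in [0,1), the kernel K_ρ(x,y) = (1-ρ²) / (ρ²(x-y)² - xyρ(1-ρ)² + (1-ρ²)²) is strictly positive; in particular the denominator ρ²(x-y)² - xyρ(1-ρ)² + (1-ρ²)² never vanishes on (-2,2)². -/
/-! Since `(1 - ρ²)² - 4ρ(1 - ρ)² = (1 - ρ)⁴`, the denominator equals
`ρ²(x - y)² + ρ(1 - ρ)²(4 - xy) + (1 - ρ)⁴`, a sum of nonnegative terms with a positive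
last term as soon as `xy ≤ 4`, `ρ ≥ 0` and `ρ ≠ 1`. -/

theorem kernel_denom_eq (x y ρ : ℝ) :
    ρ ^ 2 * (x - y) ^ 2 - x * y * ρ * (1 - ρ) ^ 2 + (1 - ρ ^ 2) ^ 2 =
      ρ ^ 2 * (x - y) ^ 2 + ρ * (1 - ρ) ^ 2 * (4 - x * y) + (1 - ρ) ^ 4 := by
  ring

theorem kernel_denom_pos {x y ρ : ℝ} (hxy : x * y ≤ 4) (hρ₀ : 0 ≤ ρ) (hρ₁ : ρ ≠ 1) :
    0 < ρ ^ 2 * (x - y) ^ 2 - x * y * ρ * (1 - ρ) ^ 2 + (1 - ρ ^ 2) ^ 2 := by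
  rw [kernel_denom_eq]
  have hlast : 0 < (1 - ρ) ^ 4 := (by decide : Even 4).pow_pos (sub_ne_zero.mpr hρ₁.symm)
  have hmiddle : 0 ≤ ρ * (1 - ρ) ^ 2 * (4 - x * y) := by
    have := sub_nonneg.mpr hxy
    positivity
  positivity

theorem mul_lt_sq_of_mem_Ioo {x y a : ℝ} (hx : x ∈ Set.Ioo (-a) a) (hy : y ∈ Set.Ioo (-a) a) :
    x * y < a ^ 2 :=
  calc x * y ≤ |x| * |y| := (le_abs_self _).trans (abs_mul x y).le
    _ < a * a := mul_lt_mul'' (abs_lt.mpr hx) (abs_lt.mpr hy) (abs_nonneg x) (abs_nonneg y)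
    _ = a ^ 2 := (sq a).symm

/-- For `x, y ∈ (-2,2)` and `ρ ∈ [0,1)`, the kernel
`K_ρ(x,y) = (1-ρ²)/(ρ²(x-y)² - xyρ(1-ρ)² + (1-ρ²)²)` is strictly positive; in
particular the denominator never vanishes on `(-2,2)²`. -/
theorem stmt2 (x y ρ : ℝ) (hx : x ∈ Set.Ioo (-2 : ℝ) 2) (hy : y ∈ Set.Ioo (-2 : ℝ) 2)
    (hρ : ρ ∈ Set.Ico (0 : ℝ) 1) :
    ρ ^ 2 * (x - y) ^ 2 - x * y * ρ * (1 - ρ) ^ 2 + (1 - ρ ^ 2) ^ 2 ≠ 0 ∧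
      0 < (1 - ρ ^ 2) / (ρ ^ 2 * (x - y) ^ 2 - x * y * ρ * (1 - ρ) ^ 2 + (1 - ρ ^ 2) ^ 2) := by
  obtain ⟨hρ₀, hρ₁⟩ := hρ
  have hxy : x * y < 2 ^ 2 := mul_lt_sq_of_mem_Ioo hx hy
  have hD := kernel_denom_pos (by norm_num at hxy; exact hxy.le) hρ₀ hρ₁.ne
  have hN : 0 < 1 - ρ ^ 2 := sub_pos.mpr (pow_lt_one₀ hρ₀ hρ₁ two_ne_zero)
  exact ⟨hD.ne', div_pos hN hD⟩
end

section
/- For x, y in (-1,1) and ρ in [0,1), setting a = x + i√(1-x²) and b = y + i√(1-y²), one has Σ_{q=0}^∞ \tilde{U}_q(x)\tilde{U}_q(y)ρ^q = (1-ρ²) / (4ρ²(x²+y²) - 4xyρ(1+ρ²) + 1 - 2ρ² + ρ⁴). -/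
/-- `Ut q` : the `q`-th Chebyshev polynomial of the second kind on `[-1,1]`,
characterized by `Ut q (cos θ) = sin ((q+1) θ) / sin θ`. -/
noncomputable def Ut (q : ℕ) (x : ℝ) : ℝ := (Polynomial.Chebyshev.U ℝ (q : ℤ)).eval x

/-!
Write `x = (a + a⁻¹) / 2` and `y = (b + b⁻¹) / 2` with `a`, `b` on the unit circle. Then
`(a - a⁻¹) Ũ_q(x) = a^(q+1) - a^(-(q+1))`, so `(a - a⁻¹)(b - b⁻¹)` times the series is a signed sum
of the four geometric series `∑ c^(q+1) ρ^q` with `c = a^(±1) b^(±1)`. Partial fractions combine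
their sums into `(1 - ρ²)(a - a⁻¹)(b - b⁻¹) / ∏ (1 - ρ c)`, and this product of four factors is
the quartic in the denominator.
-/

open Polynomial Polynomial.Chebyshev

theorem Polynomial.Chebyshev.U_eval_mul_sub {R : Type*} [CommRing R] {x a b : R}
    (hadd : a + b = 2 * x) (hmul : a * b = 1) (n : ℕ) :
    (U R n).eval x * (a - b) = a ^ (n + 1) - b ^ (n + 1) := by
  induction n using Nat.twoStepInduction with
  | zero => simp
  | one =>
    simp only [Nat.cast_one, U_one, eval_mul, eval_ofNat, eval_X]
    linear_combination (b - a) * hadd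
  | more n ih₀ ih₁ =>
    push_cast at ih₁ ⊢
    rw [U_add_two, eval_sub, eval_mul, eval_mul, eval_ofNat, eval_X]
    linear_combination 2 * x * ih₁ - ih₀ - (a ^ (n + 2) - b ^ (n + 2)) * hadd
      + (a ^ (n + 1) - b ^ (n + 1)) * hmul

theorem hasSum_pow_succ_mul_pow {K : Type*} [NormedField K] [CompleteSpace K] {c r : K}
    (h : ‖r * c‖ < 1) : HasSum (fun n : ℕ => c ^ (n + 1) * r ^ n) (c / (1 - r * c)) := by
  rw [div_eq_mul_inv, show (fun n : ℕ => c ^ (n + 1) * r ^ n) = fun n => c * (r * c) ^ n from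
    funext fun n => by ring]
  exact (hasSum_geometric_of_norm_lt_one h).mul_left c

theorem ofReal_Ut (n : ℕ) (x : ℝ) : (Ut n x : ℂ) = (U ℂ n).eval (x : ℂ) := by
  rw [Ut, ← map_U (algebraMap ℝ ℂ), eval_map_algebraMap]
  exact (aeval_algebraMap_apply_eq_algebraMap_eval x _).symm

theorem signed_sum_div_one_sub_mul_eq {K : Type*} [Field K] {a b r : K} (ha : a ≠ 0)
    (hb : b ≠ 0) (h₁ : 1 - r * (a * b) ≠ 0) (h₂ : 1 - r * (a * b⁻¹) ≠ 0) (h₃ : 1 - r * (a⁻¹ * b) ≠ 0)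
    (h₄ : 1 - r * (a⁻¹ * b⁻¹) ≠ 0) :
    a * b / (1 - r * (a * b)) - a * b⁻¹ / (1 - r * (a * b⁻¹))
      - a⁻¹ * b / (1 - r * (a⁻¹ * b)) + a⁻¹ * b⁻¹ / (1 - r * (a⁻¹ * b⁻¹))
      = (1 - r ^ 2) * ((a - a⁻¹) * (b - b⁻¹)) /
        ((1 - r * (a * b)) * (1 - r * (a * b⁻¹)) * (1 - r * (a⁻¹ * b)) * (1 - r * (a⁻¹ * b⁻¹))) := by
  rw [div_sub_div _ _ h₁ h₂, div_sub_div _ _ (mul_ne_zero h₁ h₂) h₃,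
    div_add_div _ _ (mul_ne_zero (mul_ne_zero h₁ h₂) h₃) h₄]
  congr 1
  field_simp
  ring

theorem prod_one_sub_mul_eq_of_add_inv {K : Type*} [Field K] {a b x y r : K} (ha : a ≠ 0)
    (hb : b ≠ 0) (hx : a + a⁻¹ = 2 * x) (hy : b + b⁻¹ = 2 * y) :
    (1 - r * (a * b)) * (1 - r * (a * b⁻¹)) * (1 - r * (a⁻¹ * b)) * (1 - r * (a⁻¹ * b⁻¹))
      = 4 * r ^ 2 * (x ^ 2 + y ^ 2) - 4 * x * y * r * (1 + r ^ 2) + 1 - 2 * r ^ 2 + r ^ 4 := by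
  rw [show 4 * r ^ 2 * (x ^ 2 + y ^ 2) - 4 * x * y * r * (1 + r ^ 2) + 1 - 2 * r ^ 2 + r ^ 4
      = r ^ 2 * ((2 * x) ^ 2 + (2 * y) ^ 2) - (2 * x) * (2 * y) * r * (1 + r ^ 2) + 1 - 2 * r ^ 2
        + r ^ 4 by ring, ← hx, ← hy]
  field_simp
  ring

theorem exists_norm_eq_one_add_inv {x : ℝ} (hx : x ∈ Set.Ioo (-1 : ℝ) 1) :
    ∃ a : ℂ, ‖a‖ = 1 ∧ a + a⁻¹ = 2 * x ∧ a - a⁻¹ ≠ 0 := by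
  have hs : 0 < 1 - x ^ 2 := by nlinarith [hx.1, hx.2]
  set a : ℂ := x + √(1 - x ^ 2) * Complex.I
  have ha : ‖a‖ = 1 := by
    rw [Complex.norm_add_mul_I, Real.sq_sqrt hs.le]; simp
  refine ⟨a, ha, ?_, ?_⟩
  · rw [Complex.inv_eq_conj ha, Complex.add_conj]; simp [a]
  · rw [Complex.inv_eq_conj ha, Complex.sub_conj]; simp [a, Complex.I_ne_zero, hs.ne', hs.le]

theorem hasSum_Ut_mul_Ut_mul_pow_mul {x y ρ : ℝ} {a b : ℂ} (ha : ‖a‖ = 1) (hb : ‖b‖ = 1)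
    (hax : a + a⁻¹ = 2 * x) (hby : b + b⁻¹ = 2 * y) (hρ : |ρ| < 1) :
    HasSum (fun q : ℕ => (Ut q x * Ut q y * ρ ^ q : ℂ) * ((a - a⁻¹) * (b - b⁻¹)))
      ((1 - ρ ^ 2) / (4 * ρ ^ 2 * (x ^ 2 + y ^ 2) - 4 * x * y * ρ * (1 + ρ ^ 2) + 1 - 2 * ρ ^ 2
        + ρ ^ 4) * ((a - a⁻¹) * (b - b⁻¹))) := by
  have hsmall : ∀ c : ℂ, ‖c‖ = 1 → ‖(ρ : ℂ) * c‖ < 1 := fun c hc => by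
    rwa [norm_mul, hc, mul_one, Complex.norm_real, Real.norm_eq_abs]
  have hne : ∀ c : ℂ, ‖c‖ = 1 → 1 - (ρ : ℂ) * c ≠ 0 := fun c hc h => by
    simpa [← sub_eq_zero.mp h] using hsmall c hc
  have ha₀ : a ≠ 0 := norm_ne_zero_iff.mp (by simp [ha])
  have hb₀ : b ≠ 0 := norm_ne_zero_iff.mp (by simp [hb])
  have ha' : ‖a⁻¹‖ = 1 := by rw [norm_inv, ha, inv_one]
  have hb' : ‖b⁻¹‖ = 1 := by rw [norm_inv, hb, inv_one]
  have hunit : ∀ u v : ℂ, ‖u‖ = 1 → ‖v‖ = 1 → ‖u * v‖ = 1 := fun u v hu hv => by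
    rw [norm_mul, hu, hv, one_mul]
  have geom := fun u v hu hv => hasSum_pow_succ_mul_pow (hsmall (u * v) (hunit u v hu hv))
  have hsum := (((geom a b ha hb).sub (geom a b⁻¹ ha hb')).sub (geom a⁻¹ b ha' hb)).add
    (geom a⁻¹ b⁻¹ ha' hb')
  rw [signed_sum_div_one_sub_mul_eq ha₀ hb₀ (hne _ (hunit _ _ ha hb)) (hne _ (hunit _ _ ha hb'))
    (hne _ (hunit _ _ ha' hb)) (hne _ (hunit _ _ ha' hb')),
    prod_one_sub_mul_eq_of_add_inv ha₀ hb₀ hax hby, ← div_mul_eq_mul_div] at hsum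
  refine (congrArg (HasSum · _) (funext fun q => ?_)).mp hsum
  have hUx := U_eval_mul_sub hax (mul_inv_cancel₀ ha₀) q
  have hUy := U_eval_mul_sub hby (mul_inv_cancel₀ hb₀) q
  rw [ofReal_Ut, ofReal_Ut]
  simp only [mul_pow]
  linear_combination -(ρ : ℂ) ^ q * ((U ℂ q).eval (y : ℂ) * (b - b⁻¹) * hUx
    + (a ^ (q + 1) - a⁻¹ ^ (q + 1)) * hUy)

/-- For `x, y ∈ (-1,1)` and `ρ ∈ [0,1)`,
`∑_{q≥0} Ũ_q(x) Ũ_q(y) ρ^q = (1-ρ²)/(4ρ²(x²+y²) - 4xyρ(1+ρ²) + 1 - 2ρ² + ρ⁴)`. -/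
theorem stmt5 (x y ρ : ℝ) (hx : x ∈ Set.Ioo (-1 : ℝ) 1) (hy : y ∈ Set.Ioo (-1 : ℝ) 1)
    (hρ : ρ ∈ Set.Ico (0 : ℝ) 1) :
    HasSum (fun q : ℕ => Ut q x * Ut q y * ρ ^ q)
      ((1 - ρ ^ 2) /
        (4 * ρ ^ 2 * (x ^ 2 + y ^ 2) - 4 * x * y * ρ * (1 + ρ ^ 2) + 1 - 2 * ρ ^ 2 + ρ ^ 4)) := by
  obtain ⟨a, ha, hax, ha₀⟩ := exists_norm_eq_one_add_inv hx
  obtain ⟨b, hb, hby, hb₀⟩ := exists_norm_eq_one_add_inv hy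
  have hρ' : |ρ| < 1 := abs_lt.2 ⟨by linarith [hρ.1], hρ.2⟩
  have H := hasSum_Ut_mul_Ut_mul_pow_mul ha hb hax hby hρ'
  rw [hasSum_mul_right_iff (mul_ne_zero ha₀ hb₀)] at H
  rw [← Complex.hasSum_ofReal]
  push_cast
  exact H
end

section
/- Let U be an n×n real orthogonal matrix, λ₁,...,λₙ real numbers, and f: ℝ → ℝ. With V_{k,h}^{i,j} as above, define Π_{k,h}^{p,q}[f] = Σ_{i≠j} ((f(λ_i) - f(λ_j))/(λ_i - λ_j)) V_{k,h}^{i,j} V_{p,q}^{i,j} (assuming λ_i ≠ λ_j for i ≠ j). Then Σ_{k ≤ h} Σ_{p ≤ q} (Π_{k,h}^{p,q}[f])² = 2 Σ_{i ≠ j} ((f(λ_i) - f(λ_j))/(λ_i - λ_j))². -/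
/-!
Write `a = (i, j)` for index pairs and `c a` for the divided difference of `f` at `λ_i, λ_j`.
Expanding the square, `∑_{A,B} (Π_A^B)² = ∑_{a,b} c_a c_b G(a, b)²`, where
`G(a, b) = ∑_{k ≤ h} V_{k,h}^a V_{k,h}^b` is the Gram kernel of the family `V`. Orthogonality of
`U` makes `(V_{k,h})_{k ≤ h}` an orthogonal basis of the symmetric tensors, all of norm `√2`, so
`G` is twice the projection onto symmetric tensors: `G(a, b) = [a = b] + [a = bᵀ]`. Since `c` is
symmetric and vanishes on the diagonal, the double sum collapses to `2 ∑_a c_a²`.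
-/

open Finset
open scoped Matrix

theorem sum_sum_sq_sandwich {α ι : Type*} [Fintype ι] (s : Finset α) (W : α → ι → ℝ)
    (c : ι → ℝ) :
    ∑ A ∈ s, ∑ B ∈ s, (∑ a, c a * W A a * W B a) ^ 2
      = ∑ a, ∑ b, c a * c b * (∑ A ∈ s, W A a * W A b) ^ 2 := by
  simp only [sq, sum_mul_sum]
  simp only [mul_sum]
  simp_rw [sum_comm (s := s) (t := (univ : Finset ι))]
  refine sum_congr rfl fun _ _ => sum_congr rfl fun _ _ =>
    sum_congr rfl fun _ _ => sum_congr rfl fun _ _ => ?_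
  ring

theorem two_mul_sum_upper_eq_sum {m : Type*} [Fintype m] [LinearOrder m] {F T : m → m → ℝ}
    (hT : ∀ k h, T k h = T h k) (hF : ∀ k h, k < h → F k h = T k h)
    (hF_diag : ∀ k, 2 * F k k = T k k) :
    2 * ∑ A : m × m with A.1 ≤ A.2, F A.1 A.2 = ∑ k, ∑ h, T k h := by
  rw [sum_filter, Fintype.sum_prod_type, two_mul]
  nth_rewrite 2 [sum_comm]
  rw [← sum_add_distrib]
  refine sum_congr rfl fun k _ => ?_
  rw [← sum_add_distrib]
  refine sum_congr rfl fun h _ => ?_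
  rcases lt_trichotomy k h with hkh | rfl | hkh
  · rw [if_pos hkh.le, if_neg (not_le.mpr hkh), hF k h hkh, add_zero]
  · rw [if_pos le_rfl, ← hF_diag, two_mul]
  · rw [if_neg (not_le.mpr hkh), if_pos hkh.le, hF h k hkh, zero_add, hT]

noncomputable def symTensorBasis {m ι : Type*} [DecidableEq m] (U : Matrix m ι ℝ) (k h : m)
    (i j : ι) : ℝ :=
  if k = h then √2 * U k i * U k j else U k i * U h j + U h i * U k j

theorem sum_upper_symTensorBasis_mul {m ι : Type*} [Fintype m] [LinearOrder m] [DecidableEq ι]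
    {U : Matrix m ι ℝ} (hU : Uᵀ * U = 1) (a b : ι × ι) :
    ∑ A : m × m with A.1 ≤ A.2,
        symTensorBasis U A.1 A.2 a.1 a.2 * symTensorBasis U A.1 A.2 b.1 b.2
      = (if a = b then 1 else 0) + (if a = b.swap then 1 else 0) := by
  obtain ⟨i, j⟩ := a
  obtain ⟨i', j'⟩ := b
  have hcol : ∀ x y, ∑ k, U k x * U k y = if x = y then 1 else 0 := fun x y => by
    simpa [Matrix.mul_apply, Matrix.one_apply] using congrFun (congrFun hU x) y
  have hsqrt : √2 * √2 = 2 := Real.mul_self_sqrt zero_le_two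
  have hdiag : ∀ k, 2 * (symTensorBasis U k k i j * symTensorBasis U k k i' j')
      = (U k i * U k j + U k i * U k j) * (U k i' * U k j' + U k i' * U k j') := fun k => by
    simp only [symTensorBasis, ↓reduceIte]
    linear_combination (2 * (U k i * U k j * U k i' * U k j')) * hsqrt
  suffices h : 2 * ∑ A : m × m with A.1 ≤ A.2,
      symTensorBasis U A.1 A.2 i j * symTensorBasis U A.1 A.2 i' j'
        = 2 * ((if (i, j) = (i', j') then 1 else 0) + (if (i, j) = (j', i') then 1 else 0)) from
    mul_left_cancel₀ two_ne_zero h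
  rw [two_mul_sum_upper_eq_sum
    (F := fun k h => symTensorBasis U k h i j * symTensorBasis U k h i' j')
    (T := fun k h => (U k i * U h j + U h i * U k j) * (U k i' * U h j' + U h i' * U k j'))
    (fun k h => by ring) (fun k h hkh => by simp [symTensorBasis, hkh.ne]) hdiag]
  calc ∑ k, ∑ h, (U k i * U h j + U h i * U k j) * (U k i' * U h j' + U h i' * U k j')
      = ∑ k, ∑ h, ((U k i * U k i') * (U h j * U h j') + (U k i * U k j') * (U h j * U h i')
          + (U k j * U k i') * (U h i * U h j') + (U k j * U k j') * (U h i * U h i')) :=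
        sum_congr rfl fun _ _ => sum_congr rfl fun _ _ => by ring
    _ = _ := by
        simp only [sum_add_distrib, ← mul_sum, ← sum_mul, hcol, Prod.mk.injEq, ite_and]
        split_ifs <;> subst_vars <;> simp_all <;> ring

theorem sum_sum_mul_mul_sq_ite_eq_add_ite_eq_swap {ι : Type*} [Fintype ι] [DecidableEq ι]
    {c : ι × ι → ℝ} (hc_diag : ∀ i, c (i, i) = 0) (hc_swap : ∀ a, c a.swap = c a) :
    ∑ a, ∑ b, c a * c b * ((if a = b then 1 else 0) + (if a = b.swap then 1 else 0)) ^ 2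
      = 2 * ∑ a, c a ^ 2 := by
  have hc_fixed : ∀ a : ι × ι, a = a.swap → c a = 0 := fun ⟨i, j⟩ h => by
    obtain rfl : i = j := (Prod.ext_iff.mp h).1
    exact hc_diag i
  have hterm : ∀ a b : ι × ι,
      c a * c b * ((if a = b then 1 else 0) + (if a = b.swap then 1 else 0)) ^ 2
        = (if b = a then c a ^ 2 else 0) + (if b = a.swap then c a ^ 2 else 0) := by
    intro a b
    by_cases hab : a = b
    · subst hab
      by_cases hfix : a = a.swap
      · simp [hc_fixed a hfix]
      · rw [if_pos rfl, if_pos rfl, if_neg hfix, if_neg hfix]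
        ring
    · have hba : b ≠ a := Ne.symm hab
      by_cases hab' : a = b.swap
      · subst hab'
        rw [if_neg hab, if_pos rfl, if_neg hba, Prod.swap_swap, if_pos rfl, hc_swap]
        ring
      · have hba' : b ≠ a.swap := fun h => hab' (by rw [h, Prod.swap_swap])
        rw [if_neg hab, if_neg hab', if_neg hba, if_neg hba']
        ring
  simp only [hterm, sum_add_distrib, sum_ite_eq', mem_univ, if_true, ← two_mul, mul_sum]

theorem stmt9_general (n : ℕ) (U : Matrix (Fin n) (Fin n) ℝ) (hU : U * U.transpose = 1)
    (lam : Fin n → ℝ) (f : ℝ → ℝ)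
    (V : Fin n → Fin n → Fin n → Fin n → ℝ)
    (hV : ∀ k h i j, V k h i j =
      if k = h then Real.sqrt 2 * U k i * U k j
      else U k i * U h j + U h i * U k j)
    (Pi' : Fin n → Fin n → Fin n → Fin n → ℝ)
    (hPi : ∀ k h p q, Pi' k h p q = ∑ i : Fin n, ∑ j : Fin n,
      if i ≠ j then ((f (lam i) - f (lam j)) / (lam i - lam j)) * V k h i j * V p q i j
      else 0) :
    (∑ k : Fin n, ∑ h : Fin n, ∑ p : Fin n, ∑ q : Fin n,
        if k ≤ h ∧ p ≤ q then (Pi' k h p q) ^ 2 else 0)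
      = 2 * ∑ i : Fin n, ∑ j : Fin n,
          if i ≠ j then ((f (lam i) - f (lam j)) / (lam i - lam j)) ^ 2 else 0 := by
  obtain rfl : V = symTensorBasis U := by funext k h i j; exact hV k h i j
  -- `slope f x x = 0`, so the guards `i ≠ j` can be dropped.
  set c : Fin n × Fin n → ℝ := fun a => slope f (lam a.2) (lam a.1) with hc
  have hslope : ∀ i j, (if i ≠ j then (f (lam i) - f (lam j)) / (lam i - lam j) else 0)
      = c (i, j) := fun i j => by
    by_cases hij : i = j <;> simp [hc, hij, slope_def_field]
  have hPi_c : ∀ k h p q, Pi' k h p q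
      = ∑ a, c a * symTensorBasis U k h a.1 a.2 * symTensorBasis U p q a.1 a.2 := by
    intro k h p q
    rw [hPi, Fintype.sum_prod_type]
    refine sum_congr rfl fun i _ => sum_congr rfl fun j _ => ?_
    rw [← hslope]
    split_ifs <;> simp
  calc (∑ k : Fin n, ∑ h : Fin n, ∑ p : Fin n, ∑ q : Fin n,
        if k ≤ h ∧ p ≤ q then (Pi' k h p q) ^ 2 else 0)
      = ∑ A : Fin n × Fin n with A.1 ≤ A.2, ∑ B : Fin n × Fin n with B.1 ≤ B.2,
          (∑ a, c a * symTensorBasis U A.1 A.2 a.1 a.2 * symTensorBasis U B.1 B.2 a.1 a.2) ^ 2 := by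
        simp only [sum_filter, Fintype.sum_prod_type, ite_and, sum_ite_irrel, sum_const_zero,
          ← hPi_c]
    _ = ∑ a, ∑ b, c a * c b * ((if a = b then 1 else 0) + (if a = b.swap then 1 else 0)) ^ 2 := by
        rw [sum_sum_sq_sandwich]
        simp only [sum_upper_symTensorBasis_mul (mul_eq_one_comm.mp hU)]
    _ = 2 * ∑ a, c a ^ 2 :=
        sum_sum_mul_mul_sq_ite_eq_add_ite_eq_swap (fun i => slope_same f (lam i))
          (fun a => slope_comm f (lam a.1) (lam a.2))
    _ = _ := by
        simp only [Fintype.sum_prod_type, ← hslope, ite_pow, ne_eq, OfNat.ofNat_ne_zero,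
          not_false_eq_true, zero_pow]

/-- If `U` is an `n×n` real orthogonal matrix, `λ₁,…,λₙ` are pairwise distinct reals,
`f : ℝ → ℝ`, and
`Π_{k,h}^{p,q}[f] = ∑_{i≠j} ((f(λ_i)-f(λ_j))/(λ_i-λ_j)) V_{k,h}^{i,j} V_{p,q}^{i,j}`,
then `∑_{k≤h} ∑_{p≤q} (Π_{k,h}^{p,q}[f])² = 2 ∑_{i≠j} ((f(λ_i)-f(λ_j))/(λ_i-λ_j))²`. -/
theorem stmt9 (n : ℕ) (U : Matrix (Fin n) (Fin n) ℝ) (hU : U * U.transpose = 1)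
    (lam : Fin n → ℝ) (hlam : Function.Injective lam) (f : ℝ → ℝ)
    (V : Fin n → Fin n → Fin n → Fin n → ℝ)
    (hV : ∀ k h i j, V k h i j =
      if k = h then Real.sqrt 2 * U k i * U k j
      else U k i * U h j + U h i * U k j)
    (Pi' : Fin n → Fin n → Fin n → Fin n → ℝ)
    (hPi : ∀ k h p q, Pi' k h p q = ∑ i : Fin n, ∑ j : Fin n,
      if i ≠ j then ((f (lam i) - f (lam j)) / (lam i - lam j)) * V k h i j * V p q i j
      else 0) :
    (∑ k : Fin n, ∑ h : Fin n, ∑ p : Fin n, ∑ q : Fin n,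
        if k ≤ h ∧ p ≤ q then (Pi' k h p q) ^ 2 else 0)
      = 2 * ∑ i : Fin n, ∑ j : Fin n,
          if i ≠ j then ((f (lam i) - f (lam j)) / (lam i - lam j)) ^ 2 else 0 :=
  stmt9_general n U hU lam f V hV Pi' hPi
end

section
/- Let U be an n×n real orthogonal matrix, λ₁,...,λₙ real numbers, and f: ℝ → ℝ. With V and Ψ as above, define Ψ_{k,h}^{p,q}[f] = Σ_{i=1}^n f(λ_i) V_{k,h}^{i,i} V_{p,q}^{i,i}. Then Σ_{k≤h} Σ_{p≤q} (Ψ_{k,h}^{p,q}[f])² = 4 Σ_{i=1}^n f(λ_i)². -/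
/-!
Write `uᵢ` for the `i`-th column of `U`. The vector `(V_{k,h}^{i,i})_{k ≤ h}` is `√2` times the
coordinate vector of the symmetric matrix `uᵢ uᵢᵀ` in the orthonormal basis `E_kk`,
`(E_kh + E_hk)/√2` of symmetric matrices, so the Gram matrix of these vectors is
`2 (uᵢ · uⱼ)² = 2 δᵢⱼ`. Squaring and summing the entries of `Ψ = Σᵢ f(λᵢ) wᵢ wᵢᵀ` for any family
with Gram matrix `c · 1` gives `c² Σᵢ f(λᵢ)²`.
-/

open Finset Matrix

theorem sum_sq_sum_mul_mul_eq_of_orthogonal {ι α : Type*} [Fintype ι] [DecidableEq ι]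
    [Fintype α] (w : ι → α → ℝ) (c : ℝ)
    (hw : ∀ i j, ∑ a, w i a * w j a = if i = j then c else 0) (g : ι → ℝ) :
    ∑ a, ∑ b, (∑ i, g i * w i a * w i b) ^ 2 = c ^ 2 * ∑ i, g i ^ 2 := by
  calc ∑ a, ∑ b, (∑ i, g i * w i a * w i b) ^ 2
      = ∑ i, ∑ j, g i * g j * (∑ a, w i a * w j a) * ∑ b, w i b * w j b := by
        simp_rw [sq, sum_mul_sum, mul_sum, sum_mul,
          sum_comm (s := (univ : Finset α)) (t := (univ : Finset ι))]
        refine sum_congr rfl fun _ _ => sum_congr rfl fun _ _ => ?_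
        rw [sum_comm]
        exact sum_congr rfl fun _ _ => sum_congr rfl fun _ _ => by ring
    _ = c ^ 2 * ∑ i, g i ^ 2 := by
        simp only [hw, mul_ite, mul_zero, sum_ite_eq, mem_univ, if_true, mul_sum]
        exact sum_congr rfl fun _ _ => by ring

noncomputable def symOuterCoords {κ ι : Type*} [LinearOrder κ] (U : Matrix κ ι ℝ) (i : ι)
    (p : κ × κ) : ℝ :=
  if p.1 ≤ p.2 then
    if p.1 = p.2 then √2 * U p.1 i * U p.1 i else U p.1 i * U p.2 i + U p.2 i * U p.1 i
  else 0

section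

variable {κ ι : Type*} [LinearOrder κ]

theorem symOuterCoords_mul_add_swap (U : Matrix κ ι ℝ) (i j : ι) (k h : κ) :
    symOuterCoords U i (k, h) * symOuterCoords U j (k, h)
      + symOuterCoords U i (h, k) * symOuterCoords U j (h, k)
      = 4 * (U k i * U k j) * (U h i * U h j) := by
  have hsqrt : √2 * √2 = 2 := Real.mul_self_sqrt zero_le_two
  rcases lt_trichotomy k h with hlt | rfl | hgt
  · simp only [symOuterCoords, hlt.le, hlt.ne, hlt.not_ge, if_true, if_false]
    ring
  · simp only [symOuterCoords, le_rfl, if_true]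
    linear_combination 2 * U k i * U k i * U k j * U k j * hsqrt
  · simp only [symOuterCoords, hgt.le, hgt.ne, hgt.ne', hgt.not_ge, if_true, if_false]
    ring

variable [Fintype κ]

theorem sum_symOuterCoords_mul (U : Matrix κ ι ℝ) (i j : ι) :
    ∑ p, symOuterCoords U i p * symOuterCoords U j p = 2 * (Uᵀ * U) i j ^ 2 := by
  set A : κ → κ → ℝ := fun k h => symOuterCoords U i (k, h) * symOuterCoords U j (k, h)
  have hsymm : ∑ k, ∑ h, (A k h + A h k) = 4 * (Uᵀ * U) i j ^ 2 := by
    simp_rw [A, symOuterCoords_mul_add_swap, mul_apply, transpose_apply, sq, sum_mul_sum, mul_sum]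
    exact sum_congr rfl fun _ _ => sum_congr rfl fun _ _ => by ring
  rw [Fintype.sum_prod_type]
  simp only [sum_add_distrib] at hsymm
  rw [sum_comm (f := fun k h => A h k)] at hsymm
  linarith

theorem sum_symOuterCoords_mul_of_orthonormal [DecidableEq ι] {U : Matrix κ ι ℝ} (hU : Uᵀ * U = 1)
    (i j : ι) :
    ∑ p, symOuterCoords U i p * symOuterCoords U j p = if i = j then 2 else 0 := by
  rw [sum_symOuterCoords_mul, hU, one_apply]
  split_ifs <;> norm_num

end

/-- If `U` is an `n×n` real orthogonal matrix, `λ₁,…,λₙ ∈ ℝ`, `f : ℝ → ℝ`, and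
`Ψ_{k,h}^{p,q}[f] = ∑_i f(λ_i) V_{k,h}^{i,i} V_{p,q}^{i,i}`, then
`∑_{k≤h} ∑_{p≤q} (Ψ_{k,h}^{p,q}[f])² = 4 ∑_i f(λ_i)²`. -/
theorem stmt10 (n : ℕ) (U : Matrix (Fin n) (Fin n) ℝ) (hU : U * U.transpose = 1)
    (lam : Fin n → ℝ) (f : ℝ → ℝ)
    (V : Fin n → Fin n → Fin n → Fin n → ℝ)
    (hV : ∀ k h i j, V k h i j =
      if k = h then Real.sqrt 2 * U k i * U k j
      else U k i * U h j + U h i * U k j)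
    (Ψ : Fin n → Fin n → Fin n → Fin n → ℝ)
    (hΨ : ∀ k h p q, Ψ k h p q = ∑ i : Fin n, f (lam i) * V k h i i * V p q i i) :
    (∑ k : Fin n, ∑ h : Fin n, ∑ p : Fin n, ∑ q : Fin n,
        if k ≤ h ∧ p ≤ q then (Ψ k h p q) ^ 2 else 0)
      = 4 * ∑ i : Fin n, f (lam i) ^ 2 := by
  have hΨ_sq : ∀ k h p q, (if k ≤ h ∧ p ≤ q then (Ψ k h p q) ^ 2 else 0)
      = (∑ i, f (lam i) * symOuterCoords U i (k, h) * symOuterCoords U i (p, q)) ^ 2 := by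
    intro k h p q
    by_cases hkh : k ≤ h <;> by_cases hpq : p ≤ q <;> simp [symOuterCoords, hΨ, hV, hkh, hpq]
  calc _ = ∑ a, ∑ b, (∑ i, f (lam i) * symOuterCoords U i a * symOuterCoords U i b) ^ 2 := by
        simp only [hΨ_sq, Fintype.sum_prod_type]
    _ = 2 ^ 2 * ∑ i, f (lam i) ^ 2 := sum_sq_sum_mul_mul_eq_of_orthogonal _ 2
        (sum_symOuterCoords_mul_of_orthonormal (mul_eq_one_comm.mp hU)) _
    _ = 4 * ∑ i, f (lam i) ^ 2 := by norm_num
end
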